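/- For the complete graph K_n on n ≥ 2 vertices, the harmonic index of its total graph satisfies H(T(K_n)) = n(n + 1)/4. -/

import Mathlib

open scoped Classical

/-- The total graph `T(G)` of a simple graph `G`: its vertex set is `V(G) ∪ E(G)`,
and two vertices of `T(G)` are adjacent iff the corresponding elements of `G`
are adjacent vertices, adjacent (distinct, sharing an endpoint) edges, or an
incident vertex–edge pair. -/
def SimpleGraph.totalGraph {V : Type*} (G : SimpleGraph V) :
    SimpleGraph (V ⊕ G.edgeSet) where
  Adj x y :=
    match x, y with
    | Sum.inl u, Sum.inl v => G.Adj u v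
    | Sum.inl u, Sum.inr e => u ∈ (e : Sym2 V)
    | Sum.inr e, Sum.inl u => u ∈ (e : Sym2 V)
    | Sum.inr e, Sum.inr f => e ≠ f ∧ ∃ v, v ∈ (e : Sym2 V) ∧ v ∈ (f : Sym2 V)
  symm := by
    constructor
    rintro (u | e) (v | f) h
    · exact h.symm
    · exact h
    · exact h
    · exact ⟨h.1.symm, h.2.imp fun v hv => ⟨hv.2, hv.1⟩⟩
  loopless := by
    constructor
    rintro (u | e) h
    · exact G.irrefl h
    · exact h.1 rfl

/-- The harmonic index `H(G) = ∑_{uv ∈ E(G)} 2 / (deg u + deg v)`. -/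
noncomputable def SimpleGraph.harmonicIndex {V : Type*} [Fintype V] (G : SimpleGraph V) : ℝ :=
  ∑ e ∈ G.edgeFinset,
    Sym2.lift ⟨fun u v => 2 / ((G.degree u : ℝ) + (G.degree v : ℝ)),
      fun u v => by simp [add_comm]⟩ e

/-!
In any graph `G`, a vertex `v` of the total graph `T(G)` has degree `2 deg v` (its neighbours
and its incident edges), and an edge `uv` has degree `deg u + deg v` (its two ends, and the
`deg u - 1 + deg v - 1` other edges at `u` or `v`). Hence `T(K_n)` is `(2n - 2)`-regular.
In an `r`-regular graph with `r > 0` every edge contributes `1 / r` and there are `|V| r / 2`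
edges, so `H = |V| / 2`; for `T(K_n)` this is `(n + n(n - 1)/2) / 2 = n(n + 1)/4`.
-/

namespace SimpleGraph

open Finset

theorem harmonicIndex_eq_of_isRegularOfDegree {V : Type*} [Fintype V] {G : SimpleGraph V} {d : ℕ}
    (h : G.IsRegularOfDegree d) (hd : d ≠ 0) :
    G.harmonicIndex = Fintype.card V / 2 := by
  have handshake : Fintype.card V * d = 2 * #G.edgeFinset := by
    rw [← sum_degrees_eq_twice_card_edges, sum_congr rfl fun v _ => h.degree_eq v, sum_const,
      card_univ, smul_eq_mul]
  calc G.harmonicIndex = ∑ _ ∈ G.edgeFinset, (1 / d : ℝ) := by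
        refine sum_congr rfl fun e _ => ?_
        induction e using Sym2.ind with
        | _ u v =>
          simp only [Sym2.lift_mk, h.degree_eq]
          field_simp
          ring
    _ = Fintype.card V / 2 := by
        rw [sum_const, nsmul_eq_mul]
        have : (Fintype.card V : ℝ) * d = 2 * #G.edgeFinset := by exact_mod_cast handshake
        field_simp
        linarith

-- An instance argument rather than `Classical`, so that these lemmas apply to `⊤` with its own
-- `DecidableRel` instance, which is the one inside the `Fintype` instance of `(⊤).edgeSet`.
variable {V : Type*} [Fintype V] (G : SimpleGraph V) [DecidableRel G.Adj]

theorem card_subtype_edgeSet (p : Sym2 V → Prop) [DecidablePred p] :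
    Fintype.card {e : G.edgeSet // p e} = #{e ∈ G.edgeFinset | p e} := by
  rw [Fintype.card_congr (Equiv.subtypeSubtypeEquivSubtypeInter (· ∈ G.edgeSet) p),
    Fintype.card_subtype]
  congr 1
  ext
  simp

theorem card_subtype_edgeSet_mem (u : V) :
    Fintype.card {e : G.edgeSet // u ∈ (e : Sym2 V)} = G.degree u := by
  rw [G.card_subtype_edgeSet (u ∈ ·), ← incidenceFinset_eq_filter,
    card_incidenceFinset_eq_degree]

theorem card_filter_edgeFinset_meets_of_adj {u v : V} (huv : G.Adj u v) :
    #{f ∈ G.edgeFinset | s(u, v) ≠ f ∧ ∃ w, w ∈ s(u, v) ∧ w ∈ f} =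
      G.degree u + G.degree v - 2 := by
  have hfilter : {f ∈ G.edgeFinset | s(u, v) ≠ f ∧ ∃ w, w ∈ s(u, v) ∧ w ∈ f} =
      (G.incidenceFinset u ∪ G.incidenceFinset v).erase s(u, v) := by
    ext f
    simp only [mem_filter, mem_erase, mem_union, mem_incidenceFinset, incidenceSet,
      Set.mem_ofPred_eq, mem_edgeFinset, Sym2.mem_iff, exists_eq_or_imp, exists_eq_left]
    tauto
  have hinter : G.incidenceFinset u ∩ G.incidenceFinset v = {s(u, v)} := by
    rw [← coe_inj, coe_inter, coe_incidenceFinset, coe_incidenceFinset, coe_singleton,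
      G.incidenceSet_inter_incidenceSet_of_adj huv]
  have hunion := card_union_add_card_inter (G.incidenceFinset u) (G.incidenceFinset v)
  rw [hinter, card_singleton, card_incidenceFinset_eq_degree,
    card_incidenceFinset_eq_degree] at hunion
  have hmem : s(u, v) ∈ G.incidenceFinset u ∪ G.incidenceFinset v := by simp [huv]
  rw [hfilter, card_erase_of_mem hmem]
  omega

theorem degree_totalGraph (x : V ⊕ G.edgeSet) :
    G.totalGraph.degree x = Fintype.card {v // G.totalGraph.Adj x (.inl v)} +
      Fintype.card {f : G.edgeSet // G.totalGraph.Adj x (.inr f)} := by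
  rw [← card_neighborSet_eq_degree, ← Fintype.card_sum]
  exact Fintype.card_congr Equiv.subtypeSum

theorem degree_totalGraph_inl (u : V) : G.totalGraph.degree (.inl u) = 2 * G.degree u := by
  rw [degree_totalGraph, two_mul]
  congr 1
  · convert G.card_neighborSet_eq_degree u using 3; rfl
  · convert G.card_subtype_edgeSet_mem u using 3; rfl

theorem degree_totalGraph_inr {u v : V} (he : s(u, v) ∈ G.edgeSet) :
    G.totalGraph.degree (.inr ⟨s(u, v), he⟩) = G.degree u + G.degree v := by
  have huv : G.Adj u v := he
  have hends : Fintype.card {w // G.totalGraph.Adj (.inr ⟨s(u, v), he⟩) (.inl w)} = 2 := by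
    rw [Fintype.card_subtype, ← card_pair huv.ne]
    congr 1
    ext
    simp [totalGraph]
  have hmeets : Fintype.card {f : G.edgeSet // G.totalGraph.Adj (.inr ⟨s(u, v), he⟩) (.inr f)} =
      G.degree u + G.degree v - 2 := by
    rw [← G.card_filter_edgeFinset_meets_of_adj huv,
      ← G.card_subtype_edgeSet fun f => s(u, v) ≠ f ∧ ∃ w, w ∈ s(u, v) ∧ w ∈ f]
    exact Fintype.card_congr (Equiv.subtypeEquivRight fun f => by
      simp only [totalGraph, ne_eq, Subtype.ext_iff])
  have hu := huv.degree_pos_left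
  have hv := huv.degree_pos_right
  rw [degree_totalGraph, hends, hmeets]
  omega

theorem IsRegularOfDegree.totalGraph {k : ℕ} (h : G.IsRegularOfDegree k) :
    G.totalGraph.IsRegularOfDegree (2 * k) := by
  rintro (u | ⟨e, he⟩)
  · rw [degree_totalGraph_inl, h.degree_eq]
  · induction e using Sym2.ind with
    | _ u v => rw [G.degree_totalGraph_inr he, h.degree_eq, h.degree_eq, two_mul]

end SimpleGraph

/-- For the complete graph `K_n` on `n ≥ 2` vertices, `H(T(K_n)) = n(n + 1)/4`. -/
theorem harmonicIndex_totalGraph_completeGraph (n : ℕ) (hn : 2 ≤ n) :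
    (⊤ : SimpleGraph (Fin n)).totalGraph.harmonicIndex
      = (n : ℝ) * ((n : ℝ) + 1) / 4 := by
  have hreg : (⊤ : SimpleGraph (Fin n)).totalGraph.IsRegularOfDegree (2 * (n - 1)) := by
    have htop : (⊤ : SimpleGraph (Fin n)).IsRegularOfDegree (n - 1) := fun v => by simp
    exact htop.totalGraph
  rw [SimpleGraph.harmonicIndex_eq_of_isRegularOfDegree hreg (by omega), Fintype.card_sum,
    Fintype.card_fin, SimpleGraph.card_edgeSet,
    SimpleGraph.card_edgeFinset_top_eq_card_choose_two, Fintype.card_fin]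
  push_cast [Nat.cast_choose_two]
  ring
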